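/- Let σ > 0, 0 < ρ < 1, m > 0, K > 0, and r₁, r₂ > 0. Then the bivariate Rician shadowed joint PDF given in integral form, f_{R₁,R₂}(r₁,r₂) = [8(mρ/(mρ+K))^m/(σ⁶ρ(1−ρ)²)] · r₁r₂ · exp(−(r₁²+r₂²)/(σ²(1−ρ))) · ∫₀^∞ x·exp(−(1+ρ)x²/(σ²ρ(1−ρ)))·I₀(2r₁x/(σ²(1−ρ)))·I₀(2r₂x/(σ²(1−ρ)))·₁F₁(m,1;Kx²/(σ²ρ(ρm+K))) dx, equals the convergent power series ∑_{k=0}^∞ ∑_{i=0}^{k} ∑_{n=0}^{i} α(k,i,n) r₁^{2n+1} r₂^{2(i−n)+1} exp(−(r₁²+r₂²)/(σ²(1−ρ))). -/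

import Mathlib

open MeasureTheory

/-- Pochhammer symbol (ascending factorial) `(m)_k = m (m+1) ⋯ (m+k-1)`. -/
noncomputable def poch (m : ℝ) (k : ℕ) : ℝ := ∏ j ∈ Finset.range k, (m + j)

/-- Modified Bessel function of the first kind of order zero,
`I₀(y) = ∑ (y/2)^{2n} / (n!)²`. -/
noncomputable def I0 (y : ℝ) : ℝ := ∑' n : ℕ, (y / 2) ^ (2 * n) / (Nat.factorial n : ℝ) ^ 2

/-- Confluent hypergeometric function `₁F₁(m, 1; z) = ∑ (m)_n zⁿ / (n!)²`. -/
noncomputable def F11 (m z : ℝ) : ℝ := ∑' n : ℕ, poch m n * z ^ n / (Nat.factorial n : ℝ) ^ 2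

/-- Series coefficient `α(k,i,n)` of the bivariate Rician shadowed joint PDF. -/
noncomputable def alpha (σ ρ m K : ℝ) (k i n : ℕ) : ℝ :=
  (8 * Real.rpow (m * ρ / (m * ρ + K)) m / (σ ^ 6 * ρ * (1 - ρ) ^ 2)) *
  (poch m (k - i) * (K / (σ ^ 2 * ρ * (ρ * m + K))) ^ (k - i) /
    (Nat.factorial (k - i) : ℝ) ^ 2) *
  (1 / ((Nat.factorial n : ℝ) ^ 2 * (Nat.factorial (i - n) : ℝ) ^ 2 *
    (σ ^ 2 * (1 - ρ)) ^ (2 * i))) *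
  ((Nat.factorial k : ℝ) / (2 * ((1 + ρ) / (σ ^ 2 * ρ * (1 - ρ))) ^ (k + 1)))

/-- Closed-form power series of the bivariate Rician shadowed joint PDF. -/
noncomputable def fpdf (σ ρ m K r₁ r₂ : ℝ) : ℝ :=
  ∑' k : ℕ, ∑ i ∈ Finset.range (k + 1), ∑ n ∈ Finset.range (i + 1),
    alpha σ ρ m K k i n * r₁ ^ (2 * n + 1) * r₂ ^ (2 * (i - n) + 1) *
      Real.exp (-(r₁ ^ 2 + r₂ ^ 2) / (σ ^ 2 * (1 - ρ)))

/-- `G(j,l,q,γ) = (−1)^j γ^{2(l+j+1)} q! (σ²(1−ρ))^{q+1−j} / (j!·4(l+j+1))`. -/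
noncomputable def Gfun (σ ρ : ℝ) (j l q : ℕ) (γ : ℝ) : ℝ :=
  (-1 : ℝ) ^ j * γ ^ (2 * (l + j + 1)) * (Nat.factorial q : ℝ) *
    (σ ^ 2 * (1 - ρ)) ^ ((q : ℤ) + 1 - (j : ℤ)) /
    ((Nat.factorial j : ℝ) * (4 * (l + j + 1)))

/-- `Ḡ(λ,k)`, the `(2(k+1))`-th moment of the BPP distance distribution. -/
noncomputable def Gbar (Dalt ra lam : ℝ) (k : ℕ) : ℝ :=
  ((Dalt ^ 2 + lam ^ 2 + ra ^ 2) ^ (k + 2) - (Dalt ^ 2 + lam ^ 2) ^ (k + 2)) /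
    (ra ^ 2 * (k + 2))


/-!
Expand `I₀(2β₁x)`, `I₀(2β₂x)` and `₁F₁(m,1;cx²)` as power series in `x²` with nonnegative
coefficients. Their Cauchy product is again such a series, and integrating it term by term
against `x e^{-ax²}` turns `x^{2k}` into the Gaussian moment `k!/(2a^{k+1})`; with
`a = (1+ρ)/(σ²ρ(1-ρ))`, `c = K/(σ²ρ(ρm+K))` and `βⱼ = rⱼ/(σ²(1-ρ))` these are the coefficients
`α(k,i,n)`. Termwise integration of nonnegative series is monotone convergence; the integral is
finite because `c < a`, as `I₀(2βx) ≤ e^{β²/ε + εx²}` for every `ε > 0` and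
`₁F₁(m,1;wt) ≤ C_w e^t` for `w < 1`.
-/

open Set Real
open scoped Nat

theorem integral_Ioi_pow_mul_exp_neg_mul_sq {a : ℝ} (ha : 0 < a) (N : ℕ) :
    ∫ x in Ioi (0 : ℝ), x ^ (2 * N + 1) * exp (-a * x ^ 2) = N ! / (2 * a ^ (N + 1)) := by
  have h := integral_rpow_mul_exp_neg_mul_rpow (p := 2) (q := (2 * N + 1 : ℕ)) two_pos
    (neg_one_lt_zero.trans_le (Nat.cast_nonneg _)) ha
  rw [show ((2 * N + 1 : ℕ) + 1 : ℝ) / 2 = N + 1 by push_cast; ring,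
    show -((2 * N + 1 : ℕ) + 1 : ℝ) / 2 = -(N + 1 : ℕ) by push_cast; ring,
    Real.Gamma_nat_eq_factorial, Real.rpow_neg ha.le, Real.rpow_natCast] at h
  simp_rw [Real.rpow_two, Real.rpow_natCast] at h
  rw [h]
  field_simp

theorem integrableOn_Ioi_pow_mul_exp_neg_mul_sq {a : ℝ} (ha : 0 < a) (N : ℕ) :
    IntegrableOn (fun x : ℝ => x ^ (2 * N + 1) * exp (-a * x ^ 2)) (Ioi 0) := by
  have h := integrableOn_rpow_mul_exp_neg_mul_sq ha (s := (2 * N + 1 : ℕ))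
    (neg_one_lt_zero.trans_le (Nat.cast_nonneg _))
  simpa only [Real.rpow_natCast] using h

theorem hasSum_integral_of_hasSum_of_nonneg {ι α : Type*} [Countable ι] [MeasurableSpace α]
    {μ : Measure α} {F : ι → α → ℝ} {g : α → ℝ}
    (hF : ∀ i, AEMeasurable (F i) μ) (hF0 : ∀ i, 0 ≤ᵐ[μ] F i)
    (hFg : ∀ᵐ x ∂μ, HasSum (fun i => F i x) (g x)) (hg : HasFiniteIntegral g μ) :
    HasSum (fun i => ∫ x, F i x ∂μ) (∫ x, g x ∂μ) := by
  have hF0' : ∀ᵐ x ∂μ, ∀ i, 0 ≤ F i x := ae_all_iff.2 hF0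
  have hg0 : 0 ≤ᵐ[μ] g := by
    filter_upwards [hFg, hF0'] with x hx h0 using hx.nonneg h0
  have hofReal : ∀ᵐ x ∂μ, ENNReal.ofReal (g x) = ∑' i, ENNReal.ofReal (F i x) := by
    filter_upwards [hFg, hF0'] with x hx h0
    rw [← hx.tsum_eq, ENNReal.ofReal_tsum_of_nonneg h0 hx.summable]
  have hg_meas : AEStronglyMeasurable g μ :=
    ((AEMeasurable.tsum hF).congr (hFg.mono fun x hx => hx.tsum_eq)).aestronglyMeasurable
  have hlin : ∫⁻ x, ENNReal.ofReal (g x) ∂μ = ∑' i, ∫⁻ x, ENNReal.ofReal (F i x) ∂μ := by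
    rw [lintegral_congr_ae hofReal, lintegral_tsum fun i => (hF i).ennreal_ofReal]
  have hfin : ∑' i, ∫⁻ x, ENNReal.ofReal (F i x) ∂μ ≠ ⊤ :=
    hlin ▸ ((hasFiniteIntegral_iff_ofReal hg0).1 hg).ne
  have hint : ∀ i, ∫ x, F i x ∂μ = (∫⁻ x, ENNReal.ofReal (F i x) ∂μ).toReal := fun i =>
    integral_eq_lintegral_of_nonneg_ae (hF0 i) (hF i).aestronglyMeasurable
  rw [integral_eq_lintegral_of_nonneg_ae hg0 hg_meas, hlin,
    ENNReal.tsum_toReal_eq (ENNReal.ne_top_of_tsum_ne_top hfin)]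
  simp_rw [hint]
  exact (ENNReal.summable_toReal hfin).hasSum

theorem hasSum_sum_range_mul_mul_pow_of_nonneg {a b : ℕ → ℝ} {t A B : ℝ} (ha : 0 ≤ a) (hb : 0 ≤ b)
    (ht : 0 ≤ t) (hA : HasSum (fun n => a n * t ^ n) A) (hB : HasSum (fun n => b n * t ^ n) B) :
    HasSum (fun n => (∑ k ∈ Finset.range (n + 1), a k * b (n - k)) * t ^ n) (A * B) := by
  have hnorm : ∀ {c : ℕ → ℝ}, 0 ≤ c → Summable (fun n => c n * t ^ n) →
      Summable (fun n => ‖c n * t ^ n‖) := fun hc h =>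
    h.congr fun n => (Real.norm_of_nonneg (mul_nonneg (hc n) (pow_nonneg ht n))).symm
  have h := hasSum_sum_range_mul_of_summable_norm (hnorm ha hA.summable) (hnorm hb hB.summable)
  rw [hA.tsum_eq, hB.tsum_eq] at h
  refine h.congr_fun fun n => ?_
  rw [Finset.sum_mul]
  refine Finset.sum_congr rfl fun k hk => ?_
  rw [← pow_sub_mul_pow t (Nat.lt_succ_iff.1 (Finset.mem_range.1 hk))]
  ring

theorem hasSum_pow_div_factorial_exp (x : ℝ) : HasSum (fun n => x ^ n / n !) (exp x) := by
  simpa only [Real.exp_eq_exp_ℝ] using NormedSpace.expSeries_div_hasSum_exp x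

theorem I0_term_le_exp_mul {y l t : ℝ} (hl : 0 ≤ l) (ht : 0 ≤ t) (hy : (y / 2) ^ 2 = l * t)
    (n : ℕ) :
    (y / 2) ^ (2 * n) / (n ! : ℝ) ^ 2 ≤ exp l * (t ^ n / n !) := by
  rw [pow_mul, hy, mul_pow, sq, ← div_mul_div_comm]
  exact mul_le_mul_of_nonneg_right (pow_div_factorial_le_exp l hl n) (by positivity)

theorem summable_I0_terms (y : ℝ) : Summable fun n : ℕ => (y / 2) ^ (2 * n) / (n ! : ℝ) ^ 2 :=
  .of_nonneg_of_le (fun n => by rw [pow_mul]; positivity)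
    (I0_term_le_exp_mul zero_le_one (sq_nonneg _) (one_mul _).symm)
    ((Real.summable_pow_div_factorial _).mul_left _)

theorem hasSum_I0 (y : ℝ) : HasSum (fun n : ℕ => (y / 2) ^ (2 * n) / (n ! : ℝ) ^ 2) (I0 y) :=
  (summable_I0_terms y).hasSum

theorem I0_nonneg (y : ℝ) : 0 ≤ I0 y :=
  (hasSum_I0 y).nonneg fun n => by rw [pow_mul]; positivity

theorem I0_le_exp_add {y l t : ℝ} (hl : 0 ≤ l) (ht : 0 ≤ t) (hy : (y / 2) ^ 2 = l * t) :
    I0 y ≤ exp (l + t) := by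
  rw [exp_add]
  exact hasSum_le (I0_term_le_exp_mul hl ht hy) (hasSum_I0 y)
    ((hasSum_pow_div_factorial_exp t).mul_left _)

noncomputable def besselCoeff (β : ℝ) (n : ℕ) : ℝ := (β ^ 2) ^ n / (n ! : ℝ) ^ 2

theorem besselCoeff_nonneg (β : ℝ) (n : ℕ) : 0 ≤ besselCoeff β n := by
  unfold besselCoeff; positivity

theorem hasSum_I0_two_mul (β x : ℝ) :
    HasSum (fun n => besselCoeff β n * (x ^ 2) ^ n) (I0 (2 * β * x)) := by
  refine (hasSum_I0 _).congr_fun fun n => ?_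
  rw [besselCoeff, show 2 * β * x / 2 = β * x by ring, pow_mul, mul_pow]
  ring

theorem poch_nonneg {m : ℝ} (hm : 0 ≤ m) (k : ℕ) : 0 ≤ poch m k :=
  Finset.prod_nonneg fun _ _ => by positivity

theorem poch_succ (m : ℝ) (k : ℕ) : poch m (k + 1) = poch m k * (m + k) :=
  Finset.prod_range_succ _ _

theorem summable_poch_mul_pow_div_factorial {m w : ℝ} (hm : 0 ≤ m) (hw0 : 0 ≤ w) (hw1 : w < 1) :
    Summable fun s : ℕ => poch m s * w ^ s / s ! := by
  obtain ⟨N, hN⟩ := exists_nat_ge (2 * m / (1 - w))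
  refine summable_of_ratio_norm_eventually_le (r := (1 + w) / 2) (by linarith) ?_
  filter_upwards [Filter.eventually_ge_atTop N] with n hn
  have hmn : 2 * m ≤ (1 - w) * n := by
    rw [div_le_iff₀ (by linarith)] at hN
    nlinarith [(Nat.cast_le (α := ℝ)).2 hn]
  have hratio : (m + n) * w / (n + 1) ≤ (1 + w) / 2 := by
    rw [div_le_div_iff₀ (by positivity) two_pos]
    nlinarith
  have hterm : poch m (n + 1) * w ^ (n + 1) / (n + 1)! =
      poch m n * w ^ n / n ! * ((m + n) * w / (n + 1)) := by
    rw [poch_succ, Nat.factorial_succ]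
    push_cast
    field_simp
    ring
  have h0 : 0 ≤ poch m n * w ^ n / n ! := by have := poch_nonneg hm n; positivity
  rw [Real.norm_of_nonneg (hterm ▸ mul_nonneg h0 (by positivity)), Real.norm_of_nonneg h0, hterm,
    mul_comm _ (poch m n * w ^ n / n !)]
  exact mul_le_mul_of_nonneg_left hratio h0

noncomputable def hypergeomCoeff (m z : ℝ) (s : ℕ) : ℝ := poch m s * z ^ s / (s ! : ℝ) ^ 2

theorem hypergeomCoeff_nonneg {m z : ℝ} (hm : 0 ≤ m) (hz : 0 ≤ z) (s : ℕ) :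
    0 ≤ hypergeomCoeff m z s := by
  unfold hypergeomCoeff; have := poch_nonneg hm s; positivity

theorem hypergeomCoeff_mul_le {m w t : ℝ} (hm : 0 ≤ m) (hw : 0 ≤ w) (ht : 0 ≤ t) (s : ℕ) :
    hypergeomCoeff m (w * t) s ≤ poch m s * w ^ s / s ! * exp t := by
  rw [hypergeomCoeff, mul_pow, sq, show poch m s * (w ^ s * t ^ s) / (s ! * s ! : ℝ) =
    poch m s * w ^ s / s ! * (t ^ s / s !) by ring]
  have := poch_nonneg hm s
  exact mul_le_mul_of_nonneg_left (pow_div_factorial_le_exp t ht s) (by positivity)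

theorem summable_hypergeomCoeff {m z : ℝ} (hm : 0 ≤ m) (hz : 0 ≤ z) :
    Summable (hypergeomCoeff m z) := by
  have h := hypergeomCoeff_mul_le hm (w := 1 / 2) (t := 2 * z) (by norm_num) (by positivity)
  rw [show 1 / 2 * (2 * z) = z by ring] at h
  exact .of_nonneg_of_le (hypergeomCoeff_nonneg hm hz) h
    ((summable_poch_mul_pow_div_factorial hm (by norm_num) (by norm_num)).mul_right _)

theorem hasSum_F11 {m z : ℝ} (hm : 0 ≤ m) (hz : 0 ≤ z) : HasSum (hypergeomCoeff m z) (F11 m z) :=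
  (summable_hypergeomCoeff hm hz).hasSum

theorem F11_nonneg {m z : ℝ} (hm : 0 ≤ m) (hz : 0 ≤ z) : 0 ≤ F11 m z :=
  (hasSum_F11 hm hz).nonneg (hypergeomCoeff_nonneg hm hz)

theorem F11_mul_le {m w t : ℝ} (hm : 0 ≤ m) (hw0 : 0 ≤ w) (hw1 : w < 1) (ht : 0 ≤ t) :
    F11 m (w * t) ≤ (∑' s : ℕ, poch m s * w ^ s / s !) * exp t :=
  hasSum_le (hypergeomCoeff_mul_le hm hw0 ht) (hasSum_F11 hm (by positivity))
    ((summable_poch_mul_pow_div_factorial hm hw0 hw1).hasSum.mul_right _)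

theorem hasSum_F11_mul_sq {m c : ℝ} (hm : 0 ≤ m) (hc : 0 ≤ c) (x : ℝ) :
    HasSum (fun s => hypergeomCoeff m c s * (x ^ 2) ^ s) (F11 m (c * x ^ 2)) :=
  (hasSum_F11 hm (by positivity)).congr_fun fun s => by unfold hypergeomCoeff; ring

noncomputable def pdfIntegrand (m a c β₁ β₂ x : ℝ) : ℝ :=
  x * exp (-a * x ^ 2) * I0 (2 * β₁ * x) * I0 (2 * β₂ * x) * F11 m (c * x ^ 2)

section PdfIntegrand

variable {m a c : ℝ}

theorem exists_pdfIntegrand_le (hm : 0 ≤ m) (hc : 0 ≤ c) (hca : c < a) (β₁ β₂ : ℝ) :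
    ∃ M, ∀ x, 0 ≤ x → pdfIntegrand m a c β₁ β₂ x ≤ M * (x * exp (-((a - c) / 4) * x ^ 2)) := by
  set ε := (a - c) / 8
  set θ := (a + c) / 2
  have hε : 0 < ε := by simp only [ε]; linarith
  have hθ : c < θ := by simp only [θ]; linarith
  have hθ0 : 0 < θ := hc.trans_lt hθ
  set w := c / θ
  have hw0 : 0 ≤ w := div_nonneg hc hθ0.le
  have hw1 : w < 1 := (div_lt_one hθ0).2 hθ
  set U := ∑' s : ℕ, poch m s * w ^ s / (s ! : ℝ)
  refine ⟨exp (β₁ ^ 2 / ε) * exp (β₂ ^ 2 / ε) * U, fun x hx => ?_⟩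
  have hI0 : ∀ β : ℝ, I0 (2 * β * x) ≤ exp (β ^ 2 / ε + ε * x ^ 2) := fun β =>
    I0_le_exp_add (by positivity) (by positivity) (by field_simp)
  have hF11 : F11 m (c * x ^ 2) ≤ U * exp (θ * x ^ 2) := by
    rw [show c * x ^ 2 = w * (θ * x ^ 2) by simp only [w]; field_simp]
    exact F11_mul_le hm hw0 hw1 (mul_nonneg hθ0.le (sq_nonneg x))
  calc pdfIntegrand m a c β₁ β₂ x
      ≤ x * exp (-a * x ^ 2) * exp (β₁ ^ 2 / ε + ε * x ^ 2) * exp (β₂ ^ 2 / ε + ε * x ^ 2) *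
          (U * exp (θ * x ^ 2)) := by
        unfold pdfIntegrand
        have := I0_nonneg (2 * β₁ * x)
        have := I0_nonneg (2 * β₂ * x)
        gcongr <;> first | exact hI0 _ | exact hF11 | exact F11_nonneg hm (by positivity)
    _ = exp (β₁ ^ 2 / ε) * exp (β₂ ^ 2 / ε) * U * (x * exp (-((a - c) / 4) * x ^ 2)) := by
        rw [show -((a - c) / 4) * x ^ 2 = -a * x ^ 2 + ε * x ^ 2 + ε * x ^ 2 + θ * x ^ 2 by
          simp only [ε, θ]; ring]
        simp only [exp_add]
        ring

theorem hasFiniteIntegral_pdfIntegrand (hm : 0 ≤ m) (hc : 0 ≤ c) (hca : c < a) (β₁ β₂ : ℝ) :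
    HasFiniteIntegral (pdfIntegrand m a c β₁ β₂) (volume.restrict (Ioi 0)) := by
  obtain ⟨M, hM⟩ := exists_pdfIntegrand_le hm hc hca β₁ β₂
  have hgauss :=
    (integrableOn_Ioi_pow_mul_exp_neg_mul_sq (a := (a - c) / 4) (by linarith) 0).const_mul M
  simp only [mul_zero, zero_add, pow_one] at hgauss
  refine hgauss.hasFiniteIntegral.mono
    ((ae_restrict_iff' measurableSet_Ioi).2 (.of_forall fun x hx => ?_))
  have hx0 : 0 ≤ x := le_of_lt hx
  have h0 : 0 ≤ pdfIntegrand m a c β₁ β₂ x := by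
    unfold pdfIntegrand
    have := I0_nonneg (2 * β₁ * x); have := I0_nonneg (2 * β₂ * x)
    have := F11_nonneg hm (by positivity : 0 ≤ c * x ^ 2)
    positivity
  rw [Real.norm_of_nonneg h0, Real.norm_of_nonneg (h0.trans (hM x hx0))]
  exact hM x hx0

theorem hasSum_pdfIntegrand (hm : 0 ≤ m) (hc : 0 ≤ c) (β₁ β₂ x : ℝ) :
    HasSum (fun k => (∑ i ∈ Finset.range (k + 1), ∑ n ∈ Finset.range (i + 1),
        besselCoeff β₁ n * besselCoeff β₂ (i - n) * hypergeomCoeff m c (k - i)) *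
        (x ^ (2 * k + 1) * exp (-a * x ^ 2)))
      (pdfIntegrand m a c β₁ β₂ x) := by
  have hI0I0 := hasSum_sum_range_mul_mul_pow_of_nonneg (besselCoeff_nonneg β₁)
    (besselCoeff_nonneg β₂) (sq_nonneg x) (hasSum_I0_two_mul β₁ x) (hasSum_I0_two_mul β₂ x)
  have h := hasSum_sum_range_mul_mul_pow_of_nonneg
    (fun i => Finset.sum_nonneg fun n _ =>
      mul_nonneg (besselCoeff_nonneg β₁ n) (besselCoeff_nonneg β₂ (i - n)))
    (hypergeomCoeff_nonneg hm hc) (sq_nonneg x) hI0I0 (hasSum_F11_mul_sq hm hc x)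
  rw [show pdfIntegrand m a c β₁ β₂ x = x * exp (-a * x ^ 2) *
      (I0 (2 * β₁ * x) * I0 (2 * β₂ * x) * F11 m (c * x ^ 2)) by unfold pdfIntegrand; ring]
  refine (h.mul_left (x * exp (-a * x ^ 2))).congr_fun fun k => ?_
  rw [Finset.sum_congr rfl fun i _ => Finset.sum_mul _ _ _, pow_succ, pow_mul]
  ring

theorem hasSum_integral_pdfIntegrand (hm : 0 ≤ m) (hc : 0 ≤ c) (hca : c < a) (β₁ β₂ : ℝ) :
    HasSum (fun k => ∑ i ∈ Finset.range (k + 1), ∑ n ∈ Finset.range (i + 1),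
        besselCoeff β₁ n * besselCoeff β₂ (i - n) * hypergeomCoeff m c (k - i) *
          ((k ! : ℝ) / (2 * a ^ (k + 1))))
      (∫ x in Ioi 0, pdfIntegrand m a c β₁ β₂ x) := by
  have ha : 0 < a := hc.trans_lt hca
  set coeff := fun k : ℕ => ∑ i ∈ Finset.range (k + 1), ∑ n ∈ Finset.range (i + 1),
    besselCoeff β₁ n * besselCoeff β₂ (i - n) * hypergeomCoeff m c (k - i)
  have hcoeff : ∀ k, 0 ≤ coeff k := fun k => Finset.sum_nonneg fun i _ => Finset.sum_nonneg
    fun n _ => mul_nonneg (mul_nonneg (besselCoeff_nonneg β₁ n) (besselCoeff_nonneg β₂ (i - n)))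
      (hypergeomCoeff_nonneg hm hc (k - i))
  have h := hasSum_integral_of_hasSum_of_nonneg
    (F := fun k x => coeff k * (x ^ (2 * k + 1) * exp (-a * x ^ 2)))
    (fun k => by fun_prop)
    (fun k => (ae_restrict_iff' measurableSet_Ioi).2 (.of_forall fun x hx => by
      have := hcoeff k; have : 0 < x := hx; positivity))
    (.of_forall (hasSum_pdfIntegrand hm hc β₁ β₂)) (hasFiniteIntegral_pdfIntegrand hm hc hca β₁ β₂)
  refine h.congr_fun fun k => ?_
  rw [integral_const_mul, integral_Ioi_pow_mul_exp_neg_mul_sq ha]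
  simp only [coeff, Finset.sum_mul]

end PdfIntegrand

theorem alpha_mul_pow_mul_pow {σ ρ m K : ℝ} (hd : σ ^ 2 * (1 - ρ) ≠ 0) (r₁ r₂ : ℝ) {k i n : ℕ}
    (hni : n ≤ i) :
    alpha σ ρ m K k i n * r₁ ^ (2 * n + 1) * r₂ ^ (2 * (i - n) + 1) =
      8 * Real.rpow (m * ρ / (m * ρ + K)) m / (σ ^ 6 * ρ * (1 - ρ) ^ 2) * r₁ * r₂ *
        (besselCoeff (r₁ / (σ ^ 2 * (1 - ρ))) n * besselCoeff (r₂ / (σ ^ 2 * (1 - ρ))) (i - n) *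
          hypergeomCoeff m (K / (σ ^ 2 * ρ * (ρ * m + K))) (k - i) *
          ((k ! : ℝ) / (2 * ((1 + ρ) / (σ ^ 2 * ρ * (1 - ρ))) ^ (k + 1)))) := by
  obtain ⟨q, rfl⟩ := Nat.exists_eq_add_of_le hni
  unfold alpha besselCoeff hypergeomCoeff
  simp only [Nat.add_sub_cancel_left]
  generalize σ ^ 2 * (1 - ρ) = d at hd ⊢
  generalize 8 * Real.rpow (m * ρ / (m * ρ + K)) m / (σ ^ 6 * ρ * (1 - ρ) ^ 2) = P
  generalize K / (σ ^ 2 * ρ * (ρ * m + K)) = c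
  generalize (1 + ρ) / (σ ^ 2 * ρ * (1 - ρ)) = a
  rw [show d ^ (2 * (n + q)) = (d ^ 2) ^ n * (d ^ 2) ^ q by ring, div_pow, div_pow, div_pow,
    div_pow]
  field_simp
  ring

theorem sum_alpha_mul_eq {σ ρ m K : ℝ} (hd : σ ^ 2 * (1 - ρ) ≠ 0) (r₁ r₂ E : ℝ) (k : ℕ) :
    ∑ i ∈ Finset.range (k + 1), ∑ n ∈ Finset.range (i + 1),
      alpha σ ρ m K k i n * r₁ ^ (2 * n + 1) * r₂ ^ (2 * (i - n) + 1) * E =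
      8 * Real.rpow (m * ρ / (m * ρ + K)) m / (σ ^ 6 * ρ * (1 - ρ) ^ 2) * r₁ * r₂ * E *
      ∑ i ∈ Finset.range (k + 1), ∑ n ∈ Finset.range (i + 1),
        besselCoeff (r₁ / (σ ^ 2 * (1 - ρ))) n * besselCoeff (r₂ / (σ ^ 2 * (1 - ρ))) (i - n) *
          hypergeomCoeff m (K / (σ ^ 2 * ρ * (ρ * m + K))) (k - i) *
          ((k ! : ℝ) / (2 * ((1 + ρ) / (σ ^ 2 * ρ * (1 - ρ))) ^ (k + 1))) := by
  simp only [Finset.mul_sum]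
  refine Finset.sum_congr rfl fun i _ => Finset.sum_congr rfl fun n hn => ?_
  rw [alpha_mul_pow_mul_pow hd r₁ r₂ (Nat.lt_succ_iff.1 (Finset.mem_range.1 hn))]
  ring

theorem pdfIntegrand_eq (σ ρ m K r₁ r₂ x : ℝ) :
    x * exp (-(1 + ρ) * x ^ 2 / (σ ^ 2 * ρ * (1 - ρ))) *
      I0 (2 * r₁ * x / (σ ^ 2 * (1 - ρ))) * I0 (2 * r₂ * x / (σ ^ 2 * (1 - ρ))) *
      F11 m (K * x ^ 2 / (σ ^ 2 * ρ * (ρ * m + K))) =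
      pdfIntegrand m ((1 + ρ) / (σ ^ 2 * ρ * (1 - ρ))) (K / (σ ^ 2 * ρ * (ρ * m + K)))
        (r₁ / (σ ^ 2 * (1 - ρ))) (r₂ / (σ ^ 2 * (1 - ρ))) x := by
  unfold pdfIntegrand
  ring_nf

theorem bivariate_rician_shadowed_pdf_series_general (σ ρ m K r₁ r₂ : ℝ)
    (hσ : 0 < σ) (hρ0 : 0 < ρ) (hρ1 : ρ < 1) (hm : 0 < m) (hK : 0 < K) :
    Summable (fun k : ℕ => ∑ i ∈ Finset.range (k + 1), ∑ n ∈ Finset.range (i + 1),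
      alpha σ ρ m K k i n * r₁ ^ (2 * n + 1) * r₂ ^ (2 * (i - n) + 1) *
        Real.exp (-(r₁ ^ 2 + r₂ ^ 2) / (σ ^ 2 * (1 - ρ)))) ∧
    (8 * Real.rpow (m * ρ / (m * ρ + K)) m / (σ ^ 6 * ρ * (1 - ρ) ^ 2)) * r₁ * r₂ *
      Real.exp (-(r₁ ^ 2 + r₂ ^ 2) / (σ ^ 2 * (1 - ρ))) *
      (∫ x in Set.Ioi (0 : ℝ),
        x * Real.exp (-(1 + ρ) * x ^ 2 / (σ ^ 2 * ρ * (1 - ρ))) *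
          I0 (2 * r₁ * x / (σ ^ 2 * (1 - ρ))) * I0 (2 * r₂ * x / (σ ^ 2 * (1 - ρ))) *
          F11 m (K * x ^ 2 / (σ ^ 2 * ρ * (ρ * m + K)))) =
      ∑' k : ℕ, ∑ i ∈ Finset.range (k + 1), ∑ n ∈ Finset.range (i + 1),
        alpha σ ρ m K k i n * r₁ ^ (2 * n + 1) * r₂ ^ (2 * (i - n) + 1) *
          Real.exp (-(r₁ ^ 2 + r₂ ^ 2) / (σ ^ 2 * (1 - ρ))) := by
  have hρ1' : 0 < 1 - ρ := by linarith
  have hc : 0 ≤ K / (σ ^ 2 * ρ * (ρ * m + K)) := by positivity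
  have hca : K / (σ ^ 2 * ρ * (ρ * m + K)) < (1 + ρ) / (σ ^ 2 * ρ * (1 - ρ)) := by
    have hσρ : 0 < σ ^ 2 * ρ := by positivity
    rw [div_lt_div_iff₀ (by positivity) (by positivity)]
    nlinarith [mul_pos hσρ (mul_pos hρ0 hm), mul_pos hσρ (mul_pos hρ0 hK),
      mul_pos hσρ (mul_pos (mul_pos hρ0 hρ0) hm)]
  have h := (hasSum_integral_pdfIntegrand hm.le hc hca (r₁ / (σ ^ 2 * (1 - ρ)))
    (r₂ / (σ ^ 2 * (1 - ρ)))).mul_left (8 * Real.rpow (m * ρ / (m * ρ + K)) m /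
      (σ ^ 6 * ρ * (1 - ρ) ^ 2) * r₁ * r₂ * exp (-(r₁ ^ 2 + r₂ ^ 2) / (σ ^ 2 * (1 - ρ))))
  simp only [pdfIntegrand_eq, sum_alpha_mul_eq (by positivity : σ ^ 2 * (1 - ρ) ≠ 0)]
  exact ⟨h.summable, h.tsum_eq.symm⟩

theorem bivariate_rician_shadowed_pdf_series (σ ρ m K r₁ r₂ : ℝ)
    (hσ : 0 < σ) (hρ0 : 0 < ρ) (hρ1 : ρ < 1) (hm : 0 < m) (hK : 0 < K)
    (hr₁ : 0 < r₁) (hr₂ : 0 < r₂) :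
    Summable (fun k : ℕ => ∑ i ∈ Finset.range (k + 1), ∑ n ∈ Finset.range (i + 1),
      alpha σ ρ m K k i n * r₁ ^ (2 * n + 1) * r₂ ^ (2 * (i - n) + 1) *
        Real.exp (-(r₁ ^ 2 + r₂ ^ 2) / (σ ^ 2 * (1 - ρ)))) ∧
    (8 * Real.rpow (m * ρ / (m * ρ + K)) m / (σ ^ 6 * ρ * (1 - ρ) ^ 2)) * r₁ * r₂ *
      Real.exp (-(r₁ ^ 2 + r₂ ^ 2) / (σ ^ 2 * (1 - ρ))) *
      (∫ x in Set.Ioi (0 : ℝ),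
        x * Real.exp (-(1 + ρ) * x ^ 2 / (σ ^ 2 * ρ * (1 - ρ))) *
          I0 (2 * r₁ * x / (σ ^ 2 * (1 - ρ))) * I0 (2 * r₂ * x / (σ ^ 2 * (1 - ρ))) *
          F11 m (K * x ^ 2 / (σ ^ 2 * ρ * (ρ * m + K)))) =
      ∑' k : ℕ, ∑ i ∈ Finset.range (k + 1), ∑ n ∈ Finset.range (i + 1),
        alpha σ ρ m K k i n * r₁ ^ (2 * n + 1) * r₂ ^ (2 * (i - n) + 1) *
          Real.exp (-(r₁ ^ 2 + r₂ ^ 2) / (σ ^ 2 * (1 - ρ))) :=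
  bivariate_rician_shadowed_pdf_series_general σ ρ m K r₁ r₂ hσ hρ0 hρ1 hm hK
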